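/- arXiv:1609.02892 — 2 statements merged into one kernel-verified Lean document; each statement's English description precedes it below -/
import Mathlib

section
/- Let E ⊆ ℝ^n be compact (or bounded open) with H^d(E) > 0, let f ≥ 0 be continuous on E, and let 1 < p ≤ ∞. Then (1/H^d_∞(E)) ∫_E f dH^d_∞ ≲_n ( (1/H^d_∞(E)) ∫_E f^p dH^d_∞ )^{1/p} (a Jensen-type inequality for Choquet integration against Hausdorff content). -/
open Metric Set MeasureTheory ENNReal

noncomputable section

/-- `d`-dimensional Hausdorff content. -/
def hContent {X : Type*} [EMetricSpace X] (d : ℕ) (A : Set X) : ℝ≥0∞ :=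
  ⨅ (U : ℕ → Set X) (_ : A ⊆ ⋃ i, U i), ∑' i, EMetric.diam (U i) ^ d

/-- The Choquet integral `∫_E f dH^d_∞ = ∫_0^∞ H^d_∞({x ∈ E : f x > t}) dt`. -/
def choquet {X : Type*} [EMetricSpace X] (d : ℕ) (E : Set X) (f : X → ℝ) : ℝ≥0∞ :=
  ∫⁻ t in Ioi (0:ℝ), hContent d {x | x ∈ E ∧ t < f x}

/-- The `p`-Choquet integral `∫_E f^p dH^d_∞ = ∫_0^∞ H^d_∞({x ∈ E : f x > t}) t^(p-1) dt`. -/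
def choquetP {X : Type*} [EMetricSpace X] (d : ℕ) (p : ℝ) (E : Set X) (f : X → ℝ) : ℝ≥0∞ :=
  ∫⁻ t in Ioi (0:ℝ), hContent d {x | x ∈ E ∧ t < f x} * ENNReal.ofReal (t ^ (p - 1))

/-- Hausdorff content is monotone. -/
lemma hContent_mono' {X : Type*} [EMetricSpace X] (d : ℕ) {A B : Set X} (h : A ⊆ B) :
    hContent d A ≤ hContent d B :=
  le_iInf₂ fun U hU => iInf₂_le U (h.trans hU)

/-- If the Hausdorff content vanishes, so does the Hausdorff measure. -/
lemma hausdorffMeasure_eq_zero_of_hContent_eq_zero {X : Type*} [EMetricSpace X]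
    [MeasurableSpace X] [BorelSpace X] {d : ℕ} {E : Set X} (h : hContent d E = 0) :
    μH[(d:ℝ)] E = 0 := by
  rw [← nonpos_iff_eq_zero, MeasureTheory.Measure.hausdorffMeasure_apply]
  refine iSup₂_le fun r hr => ?_
  refine ENNReal.le_of_forall_pos_le_add fun ε hε _ => ?_
  have hδ : (0:ℝ≥0∞) < min (ε : ℝ≥0∞) (r ^ d) := by
    refine lt_min (by exact_mod_cast hε) (ENNReal.pow_pos hr d)
  have hlt : (⨅ (U : ℕ → Set X) (_ : E ⊆ ⋃ i, U i), ∑' i, EMetric.diam (U i) ^ d)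
      < min (ε : ℝ≥0∞) (r ^ d) := by
    rw [show (⨅ (U : ℕ → Set X) (_ : E ⊆ ⋃ i, U i), ∑' i, EMetric.diam (U i) ^ d) = hContent d E
      from rfl, h]; exact hδ
  obtain ⟨U, hU⟩ := iInf_lt_iff.1 hlt
  obtain ⟨hcov, hsum⟩ := iInf_lt_iff.1 hU
  have hdiam : ∀ i, EMetric.diam (U i) ≤ r := by
    intro i
    by_contra hri
    push_neg at hri
    have h1 : r ^ d ≤ EMetric.diam (U i) ^ d := pow_le_pow_left₀ zero_le hri.le d
    have h2 : EMetric.diam (U i) ^ d ≤ ∑' i, EMetric.diam (U i) ^ d := ENNReal.le_tsum i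
    exact absurd ((h1.trans h2).trans_lt hsum) (not_lt.2 (min_le_right _ _))
  have h3 : (⨅ (t : ℕ → Set X) (_ : E ⊆ ⋃ n, t n) (_ : ∀ n, EMetric.diam (t n) ≤ r),
      ∑' n, ⨆ _ : (t n).Nonempty, EMetric.diam (t n) ^ (d:ℝ))
      ≤ ∑' i, EMetric.diam (U i) ^ d := by
    refine le_trans (iInf₂_le_of_le U hcov (iInf_le_of_le hdiam le_rfl)) ?_
    exact ENNReal.tsum_le_tsum fun i => iSup_le fun _ => (ENNReal.rpow_natCast _ d).le
  refine h3.trans (hsum.le.trans ?_)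
  rw [zero_add]
  exact min_le_left _ _

/-- The key analytic inequality. -/
lemma key_ineq {g : ℝ → ℝ≥0∞} {M : ℝ≥0∞} {p : ℝ} (hp : 1 < p) (hM0 : M ≠ 0) (hMt : M ≠ ∞)
    (hg : ∀ t ∈ Ioi (0:ℝ), g t ≤ M) :
    M⁻¹ * (∫⁻ t in Ioi (0:ℝ), g t) ≤
      2 * (M⁻¹ * ∫⁻ t in Ioi (0:ℝ), g t * ENNReal.ofReal (t ^ (p - 1))) ^ (1 / p) := by
  set I := ∫⁻ t in Ioi (0:ℝ), g t with hI
  set J := ∫⁻ t in Ioi (0:ℝ), g t * ENNReal.ofReal (t ^ (p - 1)) with hJ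
  have step : ∀ T : ℝ, 0 < T →
      I ≤ ENNReal.ofReal T * M + ENNReal.ofReal (T ^ (1 - p)) * J := by
    intro T hT
    have hsplit : (Ioi (0:ℝ)) = Ioc 0 T ∪ Ioi T := (Set.Ioc_union_Ioi_eq_Ioi hT.le).symm
    rw [hI, hsplit, lintegral_union measurableSet_Ioi Set.Ioc_disjoint_Ioi_same]
    refine add_le_add ?_ ?_
    · calc ∫⁻ t in Ioc (0:ℝ) T, g t ≤ ∫⁻ _ in Ioc (0:ℝ) T, M :=
            setLIntegral_mono' measurableSet_Ioc fun t ht => hg t ht.1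
        _ = M * ENNReal.ofReal T := by
            rw [setLIntegral_const, Real.volume_Ioc, sub_zero]
        _ = ENNReal.ofReal T * M := mul_comm _ _
    · have hpt : ∀ t ∈ Ioi T, g t ≤
          ENNReal.ofReal (T ^ (1 - p)) * (g t * ENNReal.ofReal (t ^ (p - 1))) := by
        intro t ht
        have htT : T < t := ht
        have hone : (1:ℝ≥0∞) ≤ ENNReal.ofReal (T ^ (1 - p)) * ENNReal.ofReal (t ^ (p - 1)) := by
          rw [← ENNReal.ofReal_mul (Real.rpow_nonneg hT.le _)]
          rw [show (1:ℝ≥0∞) = ENNReal.ofReal 1 by simp]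
          refine ENNReal.ofReal_le_ofReal ?_
          have h1 : T ^ (p - 1) ≤ t ^ (p - 1) :=
            Real.rpow_le_rpow hT.le htT.le (by linarith)
          calc (1:ℝ) = T ^ (1 - p) * T ^ (p - 1) := by
                rw [← Real.rpow_add hT]; norm_num
            _ ≤ T ^ (1 - p) * t ^ (p - 1) := by
                exact mul_le_mul_of_nonneg_left h1 (Real.rpow_nonneg hT.le _)
        calc g t = g t * 1 := (mul_one _).symm
          _ ≤ g t * (ENNReal.ofReal (T ^ (1 - p)) * ENNReal.ofReal (t ^ (p - 1))) :=
              mul_le_mul_right hone _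
          _ = ENNReal.ofReal (T ^ (1 - p)) * (g t * ENNReal.ofReal (t ^ (p - 1))) := by ring
      calc ∫⁻ t in Ioi T, g t
          ≤ ∫⁻ t in Ioi T, ENNReal.ofReal (T ^ (1 - p)) * (g t * ENNReal.ofReal (t ^ (p - 1))) :=
            setLIntegral_mono' measurableSet_Ioi hpt
        _ = ENNReal.ofReal (T ^ (1 - p)) *
              ∫⁻ t in Ioi T, g t * ENNReal.ofReal (t ^ (p - 1)) :=
            lintegral_const_mul' _ _ ENNReal.ofReal_ne_top
        _ ≤ ENNReal.ofReal (T ^ (1 - p)) * J := by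
            refine mul_le_mul_right (lintegral_mono_set fun t ht => ?_) _
            exact lt_trans hT ht
  rcases eq_or_ne J 0 with hJ0 | hJ0
  · have hI0 : I ≤ 0 := by
      have htend : Filter.Tendsto (fun T : ℝ => ENNReal.ofReal T * M)
          (nhdsWithin 0 (Ioi 0)) (nhds 0) := by
        have h1 : Filter.Tendsto (fun T : ℝ => ENNReal.ofReal T)
            (nhdsWithin 0 (Ioi 0)) (nhds 0) := by
          have := (ENNReal.continuous_ofReal.tendsto 0)
          simpa using this.mono_left nhdsWithin_le_nhds
        have := ENNReal.Tendsto.mul_const h1 (Or.inr hMt)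
        simpa using this
      refine ge_of_tendsto htend ?_
      filter_upwards [self_mem_nhdsWithin] with T hT
      have := step T hT
      rwa [hJ0, mul_zero, add_zero] at this
    have : I = 0 := le_antisymm hI0 zero_le
    rw [this, mul_zero]
    exact zero_le
  rcases eq_or_ne J ∞ with hJt | hJt
  · have : (M⁻¹ * J) ^ (1 / p) = ∞ := by
      rw [hJt, ENNReal.mul_top (ENNReal.inv_ne_zero.2 hMt)]
      exact ENNReal.top_rpow_of_pos (by positivity)
    rw [this]
    simp
  · -- main case : 0 < J < ∞
    set A := M⁻¹ * J with hA
    have hA0 : A ≠ 0 := mul_ne_zero (ENNReal.inv_ne_zero.2 hMt) hJ0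
    have hAt : A ≠ ∞ := ENNReal.mul_ne_top (ENNReal.inv_ne_top.2 hM0) hJt
    have hB0 : A ^ (1 / p) ≠ 0 := by
      simp [ENNReal.rpow_eq_zero_iff, hA0, hAt]
    have hBt : A ^ (1 / p) ≠ ∞ := by
      simp [ENNReal.rpow_eq_top_iff, hA0, hAt]
    set T := (A ^ (1 / p)).toReal with hTdef
    have hT : 0 < T := ENNReal.toReal_pos hB0 hBt
    have hofT : ENNReal.ofReal T = A ^ (1 / p) := ENNReal.ofReal_toReal hBt
    have hofT' : ENNReal.ofReal (T ^ (1 - p)) = A ^ ((1 / p) * (1 - p)) := by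
      rw [← ENNReal.ofReal_rpow_of_pos hT, hofT, ENNReal.rpow_mul]
    have hJA : J = A * M := by
      rw [hA, mul_comm M⁻¹ J, mul_assoc, ENNReal.inv_mul_cancel hM0 hMt, mul_one]
    have hstep := step T hT
    rw [hofT, hofT', hJA] at hstep
    have hsecond : A ^ ((1 / p) * (1 - p)) * (A * M) = A ^ (1 / p) * M := by
      rw [← mul_assoc]
      congr 1
      have : A ^ ((1 / p) * (1 - p)) * A = A ^ ((1 / p) * (1 - p) + 1) := by
        rw [ENNReal.rpow_add _ _ hA0 hAt, ENNReal.rpow_one]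
      rw [this]
      congr 1
      field_simp
      ring
    rw [hsecond, ← two_mul] at hstep
    calc M⁻¹ * I ≤ M⁻¹ * (2 * (A ^ (1 / p) * M)) := mul_le_mul_right hstep _
      _ = 2 * A ^ (1 / p) * (M⁻¹ * M) := by ring
      _ = 2 * A ^ (1 / p) := by rw [ENNReal.inv_mul_cancel hM0 hMt, mul_one]

/-- Jensen-type inequality for Choquet integration against Hausdorff content: for `E` compact
(or bounded open) with `H^d(E) > 0`, `f ≥ 0` continuous on `E`, and `1 < p`,
`(1/H^d_∞(E)) ∫_E f dH^d_∞ ≲_n ((1/H^d_∞(E)) ∫_E f^p dH^d_∞)^(1/p)`. -/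
theorem stmt_2 (n d : ℕ) :
    ∃ C : ℝ≥0∞, C ≠ ∞ ∧
      ∀ (p : ℝ), 1 < p →
      ∀ (E : Set (EuclideanSpace ℝ (Fin n))) (f : EuclideanSpace ℝ (Fin n) → ℝ),
        (IsCompact E ∨ (IsOpen E ∧ Bornology.IsBounded E)) →
        0 < μH[(d:ℝ)] E →
        ContinuousOn f E → (∀ x ∈ E, 0 ≤ f x) →
        (hContent d E)⁻¹ * choquet d E f ≤
          C * ((hContent d E)⁻¹ * choquetP d p E f) ^ (1 / p) := by
  refine ⟨2, by norm_num, ?_⟩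
  intro p hp E f _ hμ _ _
  rcases eq_or_ne (hContent d E) ∞ with hMt | hMt
  · rw [hMt]
    simp
  · have hM0 : hContent d E ≠ 0 := by
      intro h0
      exact absurd (hausdorffMeasure_eq_zero_of_hContent_eq_zero h0) hμ.ne'
    exact key_ineq hp hM0 hMt fun t _ => hContent_mono' d fun x hx => hx.1
end
end

section
/- Let 1 ≤ p < ∞, let E ⊆ ℝ^n be a closed set, and let B be a ball centered on E with H^d_∞(E ∩ B) > 0. Then β_E^{d,1}(B) ≲_n β_E^{d,p}(B). -/
open Metric Set MeasureTheory ENNReal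

noncomputable section

/-- An affine `d`-plane: a nonempty affine subspace with direction of dimension `d`. -/
def IsAffPlane {X : Type*} [NormedAddCommGroup X] [NormedSpace ℝ X] (d : ℕ)
    (P : AffineSubspace ℝ X) : Prop :=
  (P : Set X).Nonempty ∧ Module.finrank ℝ P.direction = d

/-- The content beta number `β_E^{d,p}(B(x,r),P)`, with `t` ranging over `(0,1)`. -/
def betaPlaneP {X : Type*} [NormedAddCommGroup X] [NormedSpace ℝ X] (d : ℕ) (p : ℝ)
    (E : Set X) (x : X) (r : ℝ) (P : AffineSubspace ℝ X) : ℝ≥0∞ :=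
  ((ENNReal.ofReal (r ^ d))⁻¹ *
    ∫⁻ t in Ioo (0:ℝ) 1,
      hContent d {y | y ∈ closedBall x r ∩ E ∧ t * r < infDist y (P : Set X)} *
        ENNReal.ofReal (t ^ (p - 1))) ^ (1 / p)

/-- `β_E^{d,p}(B(x,r))`: infimum over affine `d`-planes. -/
def betaP {X : Type*} [NormedAddCommGroup X] [NormedSpace ℝ X] (d : ℕ) (p : ℝ)
    (E : Set X) (x : X) (r : ℝ) : ℝ≥0∞ :=
  ⨅ (P : AffineSubspace ℝ X) (_ : IsAffPlane d P), betaPlaneP d p E x r P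

/- Auxiliary lemmas -/

lemma hContent_le_diam_pow {X : Type*} [EMetricSpace X] {d : ℕ} (hd : d ≠ 0) (S : Set X) :
    hContent d S ≤ EMetric.diam S ^ d := by
  have hcov : S ⊆ ⋃ i : ℕ, (fun i => if i = 0 then S else (∅ : Set X)) i := by
    intro y hy
    exact mem_iUnion.2 ⟨0, by simpa using hy⟩
  rw [hContent]
  refine le_trans (iInf₂_le (fun i => if i = 0 then S else (∅ : Set X)) hcov) ?_
  rw [tsum_eq_single 0]
  · simp
  · intro i hi
    simp [hi, EMetric.diam, Metric.ediam_empty, zero_pow hd]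

lemma hContent_zero_eq_top {X : Type*} [EMetricSpace X] (S : Set X) : hContent 0 S = ⊤ := by
  rw [hContent, iInf_eq_top]
  intro U
  rw [iInf_eq_top]
  intro _
  simp only [pow_zero]
  exact ENNReal.tsum_const_eq_top_of_ne_zero one_ne_zero

lemma hContent_le_hausdorffMeasure {X : Type*} [EMetricSpace X] [MeasurableSpace X]
    [BorelSpace X] {d : ℕ} (hd : d ≠ 0) (s : Set X) :
    hContent d s ≤ μH[(d : ℝ)] s := by
  rw [Measure.hausdorffMeasure_apply]
  refine le_trans ?_ (le_iSup₂ (1 : ℝ≥0∞) zero_lt_one)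
  refine le_iInf fun t => le_iInf fun hcov => le_iInf fun _ => ?_
  rw [hContent]
  refine le_trans (iInf₂_le t hcov) (ENNReal.tsum_le_tsum fun m => ?_)
  rcases (t m).eq_empty_or_nonempty with h | h
  · simp [h, EMetric.diam, Metric.ediam_empty, zero_pow hd]
  · rw [iSup_pos h, ← ENNReal.rpow_natCast]; exact le_rfl

/-- The core integral inequality. -/
lemma core_ineq {h : ℝ → ℝ≥0∞} {m rd p : ℝ} (hrd : 0 < rd) (hmrd : rd ≤ m) (hp : 1 ≤ p)
    (hle : ∀ t ∈ Ioo (0:ℝ) 1, h t ≤ ENNReal.ofReal m) :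
    (ENNReal.ofReal rd)⁻¹ * ∫⁻ t in Ioo (0:ℝ) 1, h t ≤
      ENNReal.ofReal (2 * (m / rd)) *
        ((ENNReal.ofReal rd)⁻¹ *
          ∫⁻ t in Ioo (0:ℝ) 1, h t * ENNReal.ofReal (t ^ (p - 1))) ^ (1 / p) := by
  have hm : 0 < m := hrd.trans_le hmrd
  have hp0 : (0:ℝ) < p := lt_of_lt_of_le one_pos hp
  set A := ∫⁻ t in Ioo (0:ℝ) 1, h t with hA
  have hAM : A ≤ ENNReal.ofReal m := by
    calc A ≤ ∫⁻ _ in Ioo (0:ℝ) 1, ENNReal.ofReal m := by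
          refine lintegral_mono_ae ?_
          filter_upwards [ae_restrict_mem measurableSet_Ioo] with t ht
          exact hle t ht
      _ = ENNReal.ofReal m * volume (Ioo (0:ℝ) 1) := setLIntegral_const _ _
      _ ≤ ENNReal.ofReal m := by
          rw [Real.volume_Ioo]
          simp
  have hAtop : A ≠ ⊤ := (hAM.trans_lt ofReal_lt_top).ne
  by_cases hA0 : A = 0
  · rw [hA0, mul_zero]
    exact bot_le
  set a := A.toReal with ha_def
  have ha : 0 < a := toReal_pos hA0 hAtop
  have hAa : A = ENNReal.ofReal a := (ofReal_toReal hAtop).symm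
  have ham : a ≤ m := by
    rw [hAa] at hAM
    exact (ofReal_le_ofReal_iff hm.le).1 hAM
  set s := a / (2 * m) with hs_def
  have hs : 0 < s := div_pos ha (by linarith)
  have hs1 : s < 1 := by
    rw [hs_def, div_lt_one (by linarith)]
    linarith
  have hams : a = 2 * m * s := by
    rw [hs_def]
    field_simp
  -- Half of the mass of h lies above s
  have hhalf : A / 2 ≤ ∫⁻ t in Ioo s 1, h t := by
    have hsub : Ioo (0:ℝ) 1 ⊆ Ioc 0 s ∪ Ioo s 1 := by
      intro t ht
      rcases le_or_gt t s with h' | h'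
      · exact Or.inl ⟨ht.1, h'⟩
      · exact Or.inr ⟨h', ht.2⟩
    have hsplit : A ≤ A / 2 + ∫⁻ t in Ioo s 1, h t := by
      calc A ≤ ∫⁻ t in Ioc 0 s ∪ Ioo s 1, h t :=
            lintegral_mono' (Measure.restrict_mono hsub le_rfl) le_rfl
        _ ≤ (∫⁻ t in Ioc 0 s, h t) + ∫⁻ t in Ioo s 1, h t := lintegral_union_le _ _ _
        _ ≤ A / 2 + ∫⁻ t in Ioo s 1, h t := by
            refine add_le_add_left ?_ _
            calc (∫⁻ t in Ioc 0 s, h t) ≤ ∫⁻ _ in Ioc (0:ℝ) s, ENNReal.ofReal m := by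
                  refine lintegral_mono_ae ?_
                  filter_upwards [ae_restrict_mem measurableSet_Ioc] with t ht
                  exact hle t ⟨ht.1, lt_of_le_of_lt ht.2 hs1⟩
              _ = ENNReal.ofReal m * volume (Ioc (0:ℝ) s) := setLIntegral_const _ _
              _ = A / 2 := by
                  rw [Real.volume_Ioc, sub_zero, ← ENNReal.ofReal_mul hm.le, hAa,
                    ← ENNReal.ofReal_ofNat 2, ← ENNReal.ofReal_div_of_pos two_pos]
                  congr 1
                  rw [hams]
                  ring
    have h2 : A - A / 2 ≤ ∫⁻ t in Ioo s 1, h t := tsub_le_iff_left.2 hsplit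
    rwa [ENNReal.sub_half hAtop] at h2
  -- Lower bound for the p-integral
  set Ip := ∫⁻ t in Ioo (0:ℝ) 1, h t * ENNReal.ofReal (t ^ (p - 1)) with hIp_def
  have hIp : ENNReal.ofReal (s ^ (p - 1)) * (A / 2) ≤ Ip := by
    calc ENNReal.ofReal (s ^ (p - 1)) * (A / 2)
        ≤ ENNReal.ofReal (s ^ (p - 1)) * ∫⁻ t in Ioo s 1, h t := mul_le_mul_right hhalf _
      _ = ∫⁻ t in Ioo s 1, ENNReal.ofReal (s ^ (p - 1)) * h t :=
          (lintegral_const_mul' _ _ ofReal_ne_top).symm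
      _ ≤ ∫⁻ t in Ioo s 1, h t * ENNReal.ofReal (t ^ (p - 1)) := by
          refine lintegral_mono_ae ?_
          filter_upwards [ae_restrict_mem measurableSet_Ioo] with t ht
          rw [mul_comm]
          exact mul_le_mul_right
            (ofReal_le_ofReal (Real.rpow_le_rpow hs.le ht.1.le (by linarith))) _
      _ ≤ Ip := lintegral_mono' (Measure.restrict_mono (Ioo_subset_Ioo hs.le le_rfl) le_rfl)
            le_rfl
  -- Conclude
  have hRinv : (ENNReal.ofReal rd)⁻¹ = ENNReal.ofReal rd⁻¹ := (ofReal_inv_of_pos hrd).symm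
  have hA2 : A / 2 = ENNReal.ofReal (a / 2) := by
    rw [hAa, ← ENNReal.ofReal_ofNat 2, ← ENNReal.ofReal_div_of_pos two_pos]
  have hkey : ENNReal.ofReal (s ^ p * (m / rd)) ≤
      (ENNReal.ofReal rd)⁻¹ * Ip := by
    calc ENNReal.ofReal (s ^ p * (m / rd))
        = (ENNReal.ofReal rd)⁻¹ * (ENNReal.ofReal (s ^ (p - 1)) * (A / 2)) := by
          rw [hRinv, hA2, ← ENNReal.ofReal_mul (Real.rpow_nonneg hs.le _),
            ← ENNReal.ofReal_mul (inv_nonneg.2 hrd.le)]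
          congr 1
          have hsp : s ^ (p - 1) * s = s ^ p := by
            rw [← Real.rpow_add_one hs.ne' (p - 1), sub_add_cancel]
          rw [hams]
          have hre : s ^ (p - 1) * (2 * m * s / 2) = s ^ (p - 1) * s * m := by ring
          rw [hre, hsp, div_eq_inv_mul]
          ring
      _ ≤ (ENNReal.ofReal rd)⁻¹ * Ip := mul_le_mul_right hIp _
  have hw : ENNReal.ofReal s ≤ ((ENNReal.ofReal rd)⁻¹ * Ip) ^ (1 / p) := by
    have hwpos : (0:ℝ) < s ^ p * (m / rd) :=
      mul_pos (Real.rpow_pos_of_pos hs _) (div_pos hm hrd)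
    calc ENNReal.ofReal s ≤ ENNReal.ofReal ((s ^ p * (m / rd)) ^ (1 / p)) := by
          refine ofReal_le_ofReal ?_
          have h1 : s ^ p ≤ s ^ p * (m / rd) :=
            le_mul_of_one_le_right (Real.rpow_nonneg hs.le _) ((one_le_div hrd).2 hmrd)
          calc s = (s ^ p) ^ (1 / p) := by
                rw [← Real.rpow_mul hs.le, mul_one_div_cancel hp0.ne', Real.rpow_one]
            _ ≤ (s ^ p * (m / rd)) ^ (1 / p) :=
                Real.rpow_le_rpow (Real.rpow_nonneg hs.le _) h1 (by positivity)
      _ = ENNReal.ofReal (s ^ p * (m / rd)) ^ (1 / p) :=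
          (ofReal_rpow_of_pos hwpos).symm
      _ ≤ ((ENNReal.ofReal rd)⁻¹ * Ip) ^ (1 / p) :=
          ENNReal.rpow_le_rpow hkey (by positivity)
  calc (ENNReal.ofReal rd)⁻¹ * A = ENNReal.ofReal (2 * (m / rd) * s) := by
        rw [hRinv, hAa, ← ENNReal.ofReal_mul (inv_nonneg.2 hrd.le)]
        congr 1
        rw [hams, div_eq_inv_mul]
        ring
    _ = ENNReal.ofReal (2 * (m / rd)) * ENNReal.ofReal s := by
        rw [← ENNReal.ofReal_mul (by positivity)]
    _ ≤ ENNReal.ofReal (2 * (m / rd)) * ((ENNReal.ofReal rd)⁻¹ * Ip) ^ (1 / p) :=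
        mul_le_mul_right hw _

/-- The per-plane comparison. -/
lemma key_plane {X : Type*} [NormedAddCommGroup X] [NormedSpace ℝ X] {n d : ℕ} (hd : d ≠ 0)
    (hdn : d ≤ n) {p : ℝ} (hp : 1 ≤ p) (E : Set X) (x : X) {r : ℝ} (hr : 0 < r)
    (P : AffineSubspace ℝ X) :
    betaPlaneP d 1 E x r P ≤ ENNReal.ofReal (2 ^ (n + 1)) * betaPlaneP d p E x r P := by
  have hrd : 0 < r ^ d := pow_pos hr d
  have hdiam : EMetric.diam (closedBall x r) ≤ ENNReal.ofReal (2 * r) := by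
    apply EMetric.diam_le
    intro y hy z hz
    rw [edist_dist]
    apply ofReal_le_ofReal
    have hy' := mem_closedBall.1 hy
    have hz' := mem_closedBall.1 hz
    calc dist y z ≤ dist y x + dist x z := dist_triangle _ _ _
      _ ≤ 2 * r := by rw [dist_comm x z]; linarith
  have hle : ∀ t ∈ Ioo (0:ℝ) 1,
      hContent d {y | y ∈ closedBall x r ∩ E ∧ t * r < infDist y (P : Set X)} ≤
        ENNReal.ofReal ((2 * r) ^ d) := by
    intro t _
    calc hContent d {y | y ∈ closedBall x r ∩ E ∧ t * r < infDist y (P : Set X)}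
        ≤ EMetric.diam {y | y ∈ closedBall x r ∩ E ∧ t * r < infDist y (P : Set X)} ^ d :=
          hContent_le_diam_pow hd _
      _ ≤ EMetric.diam (closedBall x r) ^ d := by
          refine pow_le_pow_left' (EMetric.diam_mono ?_) d
          intro y hy
          exact hy.1.1
      _ ≤ ENNReal.ofReal (2 * r) ^ d := pow_le_pow_left' hdiam d
      _ = ENNReal.ofReal ((2 * r) ^ d) := (ENNReal.ofReal_pow (by linarith) d).symm
  have hmrd : r ^ d ≤ (2 * r) ^ d := pow_le_pow_left₀ hr.le (by linarith) d
  have hmono := core_ineq (h := fun t =>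
      hContent d {y | y ∈ closedBall x r ∩ E ∧ t * r < infDist y (P : Set X)})
      hrd hmrd hp hle
  rw [betaPlaneP, betaPlaneP]
  have h11 : (1:ℝ) - 1 = 0 := by norm_num
  simp only [h11, Real.rpow_zero, ofReal_one, mul_one, one_div_one, ENNReal.rpow_one]
  refine hmono.trans ?_
  refine mul_le_mul_left (ofReal_le_ofReal ?_) _
  have h2d : (2 * r) ^ d / r ^ d = 2 ^ d := by
    rw [mul_pow]
    field_simp
  rw [h2d]
  calc (2:ℝ) * 2 ^ d = 2 ^ (d + 1) := by ring
    _ ≤ 2 ^ (n + 1) := by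
        apply pow_le_pow_right₀ (by norm_num)
        omega

/-- For a closed set `E` and a ball `B` centered on `E` with `H^d_∞(E ∩ B) > 0`,
`β_E^{d,1}(B) ≲_n β_E^{d,p}(B)` for `1 ≤ p < ∞`, with constant depending only on `n`. -/
theorem stmt_5 (n : ℕ) :
    ∃ C : ℝ≥0∞, C ≠ ∞ ∧
      ∀ (d : ℕ) (p : ℝ), 1 ≤ p →
      ∀ (E : Set (EuclideanSpace ℝ (Fin n))), IsClosed E →
      ∀ x ∈ E, ∀ r : ℝ, 0 < r →
        0 < hContent d (E ∩ closedBall x r) →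
        betaP d 1 E x r ≤ C * betaP d p E x r := by
  refine ⟨ENNReal.ofReal (2 ^ (n + 1)), ofReal_ne_top, ?_⟩
  intro d p hp E _hE x _hx r hr hpos
  have hC0 : ENNReal.ofReal ((2:ℝ) ^ (n + 1)) ≠ 0 := by
    simp only [ne_eq, ofReal_eq_zero, not_le]
    positivity
  have hp0 : (0:ℝ) < p := lt_of_lt_of_le one_pos hp
  by_cases hd : d = 0
  · subst hd
    have hbp : betaP 0 p E x r = ⊤ := by
      rw [betaP, iInf_eq_top]
      intro P
      rw [iInf_eq_top]
      intro _
      rw [betaPlaneP]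
      have hint : (∫⁻ t in Ioo (0:ℝ) 1,
          hContent 0 {y | y ∈ closedBall x r ∩ E ∧ t * r < infDist y (P : Set _)} *
            ENNReal.ofReal (t ^ (p - 1))) = ⊤ := by
        have hpt : ∀ t ∈ Ioo (0:ℝ) 1,
            hContent 0 {y | y ∈ closedBall x r ∩ E ∧ t * r < infDist y (P : Set _)} *
              ENNReal.ofReal (t ^ (p - 1)) = (⊤ : ℝ≥0∞) := by
          intro t ht
          rw [hContent_zero_eq_top, ENNReal.top_mul]
          exact (ofReal_pos.2 (Real.rpow_pos_of_pos ht.1 _)).ne'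
        rw [setLIntegral_congr_fun measurableSet_Ioo hpt, setLIntegral_const,
          Real.volume_Ioo]
        simp
      rw [hint]
      simp only [pow_zero, ofReal_one, inv_one, one_mul]
      exact ENNReal.top_rpow_of_pos (by positivity)
    rw [hbp, ENNReal.mul_top hC0]
    exact le_top
  · by_cases hdn : n < d
    · exfalso
      have h1 : hContent d (E ∩ closedBall x r) ≤ μH[(d : ℝ)] (E ∩ closedBall x r) :=
        hContent_le_hausdorffMeasure hd _
      have hlt : dimH (E ∩ closedBall x r) < ((d : NNReal) : ℝ≥0∞) := by
        calc dimH (E ∩ closedBall x r) ≤ dimH (univ : Set (EuclideanSpace ℝ (Fin n))) :=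
              dimH_mono (subset_univ _)
          _ = (Module.finrank ℝ (EuclideanSpace ℝ (Fin n)) : ℝ≥0∞) :=
              Real.dimH_univ_eq_finrank _
          _ = (n : ℝ≥0∞) := by rw [finrank_euclideanSpace_fin]
          _ < ((d : NNReal) : ℝ≥0∞) := by
              rw [show ((d : NNReal) : ℝ≥0∞) = (d : ℝ≥0∞) by simp]
              exact_mod_cast hdn
      have h2 : μH[((d : NNReal) : ℝ)] (E ∩ closedBall x r) = 0 :=
        hausdorffMeasure_of_dimH_lt hlt
      rw [show ((d : NNReal) : ℝ) = (d : ℝ) by simp] at h2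
      exact hpos.not_ge (h1.trans h2.le)
    · push_neg at hdn
      calc betaP d 1 E x r
          ≤ ⨅ (P : AffineSubspace ℝ (EuclideanSpace ℝ (Fin n))) (_ : IsAffPlane d P),
              ENNReal.ofReal (2 ^ (n + 1)) * betaPlaneP d p E x r P :=
            le_iInf₂ fun P hP => (iInf₂_le P hP).trans (key_plane hd hdn hp E x hr P)
        _ = ENNReal.ofReal (2 ^ (n + 1)) * betaP d p E x r := by
            rw [betaP]
            simp_rw [← ENNReal.mul_iInf_of_ne hC0 ofReal_ne_top]
end
end
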